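/- arXiv:2507.18871 — 2 statements merged into one kernel-verified Lean document; each statement's English description precedes it below -/
import Mathlib

section
/- Let H be a complex Hilbert space, A a positive bounded linear operator on H, T an A-bounded operator on H, and let x ∈ H with ‖x‖_A ≠ 0. Then for each α ∈ U the following are equivalent: (i) T maps x^{⊥_α^A} into (Tx)^{⊥_α^A}; (ii) Re(α⟨Ty, Tx⟩_A) = (‖Tx‖_A² / ‖x‖_A²) · Re(α⟨y, x⟩_A) for all y ∈ H. -/
open ContinuousLinearMap

variable {H : Type*}

/-- The semi-norm induced by the positive operator `A`: `‖x‖_A = √(re ⟪A x, x⟫)`. -/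
noncomputable def seminormA [NormedAddCommGroup H] [InnerProductSpace ℂ H]
    (A : H →L[ℂ] H) (x : H) : ℝ :=
  Real.sqrt ((inner ℂ (A x) x : ℂ)).re

/-- The semi-inner product induced by `A`: `⟨x, y⟩_A = ⟪A x, y⟫`. -/
noncomputable def ipA [NormedAddCommGroup H] [InnerProductSpace ℂ H]
    (A : H →L[ℂ] H) (x y : H) : ℂ :=
  inner ℂ (A x) y

/-- `U = {α ∈ ℂ : |α| = 1, arg α ∈ [0, π)}`. -/
def Uset : Set ℂ := {α : ℂ | ‖α‖ = 1 ∧ 0 ≤ α.arg ∧ α.arg < Real.pi}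

/-- `(x)_α^{A+}`. -/
def plusSetAlpha [NormedAddCommGroup H] [InnerProductSpace ℂ H]
    (A : H →L[ℂ] H) (α : ℂ) (x : H) : Set H :=
  {y | ∀ t : ℝ, 0 ≤ t → seminormA A x ≤ seminormA A (x + ((t : ℂ) * α) • y)}

/-- `(x)_α^{A-}`. -/
def minusSetAlpha [NormedAddCommGroup H] [InnerProductSpace ℂ H]
    (A : H →L[ℂ] H) (α : ℂ) (x : H) : Set H :=
  {y | ∀ t : ℝ, t ≤ 0 → seminormA A x ≤ seminormA A (x + ((t : ℂ) * α) • y)}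

/-- `x^{⊥_α^A}`. -/
def perpSetAlpha [NormedAddCommGroup H] [InnerProductSpace ℂ H]
    (A : H →L[ℂ] H) (α : ℂ) (x : H) : Set H :=
  {y | ∀ t : ℝ, seminormA A x ≤ seminormA A (x + ((t : ℂ) * α) • y)}

/-- `x^{A+} = ⋂_{α ∈ U} (x)_α^{A+}`. -/
def plusSetA [NormedAddCommGroup H] [InnerProductSpace ℂ H]
    (A : H →L[ℂ] H) (x : H) : Set H :=
  ⋂ α ∈ Uset, plusSetAlpha A α x

/-- `x^{A-} = ⋂_{α ∈ U} (x)_α^{A-}`. -/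
def minusSetA [NormedAddCommGroup H] [InnerProductSpace ℂ H]
    (A : H →L[ℂ] H) (x : H) : Set H :=
  ⋂ α ∈ Uset, minusSetAlpha A α x

/-- `x^{⊥_A} = ⋂_{α ∈ U} x^{⊥_α^A}`. -/
def perpSetA [NormedAddCommGroup H] [InnerProductSpace ℂ H]
    (A : H →L[ℂ] H) (x : H) : Set H :=
  ⋂ α ∈ Uset, perpSetAlpha A α x

lemma conj_mul_self_unit {α : ℂ} (hα : ‖α‖ = 1) : (starRingEnd ℂ) α * α = 1 := by
  rw [mul_comm, Complex.mul_conj]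
  norm_cast
  simp [Complex.normSq_eq_norm_sq, hα]

lemma ipA_conj' [NormedAddCommGroup H] [InnerProductSpace ℂ H] [CompleteSpace H]
    (A : H →L[ℂ] H) (hA : A.IsPositive) (u v : H) :
    (inner ℂ (A u) v : ℂ) = (starRingEnd ℂ) (inner ℂ (A v) u) := by
  rw [← inner_conj_symm]
  congr 1
  exact (hA.1 v u).symm

lemma expand_re [NormedAddCommGroup H] [InnerProductSpace ℂ H] [CompleteSpace H]
    (A : H →L[ℂ] H) (hA : A.IsPositive) {α : ℂ} (hα : ‖α‖ = 1)
    (x y : H) (t : ℝ) :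
    (inner ℂ (A (x + ((t:ℂ)*α)•y)) (x + ((t:ℂ)*α)•y) : ℂ).re
      = (inner ℂ (A x) x : ℂ).re + 2*t*((starRingEnd ℂ) α * inner ℂ (A y) x).re
        + t^2*(inner ℂ (A y) y : ℂ).re := by
  have hc : (inner ℂ (A (x + ((t:ℂ)*α)•y)) (x + ((t:ℂ)*α)•y) : ℂ)
      = inner ℂ (A x) x + ((t:ℂ)*α) * (starRingEnd ℂ) (inner ℂ (A y) x)
        + (starRingEnd ℂ) ((t:ℂ)*α) * inner ℂ (A y) x
        + (((t:ℂ)*α) * (starRingEnd ℂ) ((t:ℂ)*α)) * inner ℂ (A y) y := by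
    rw [map_add, map_smul, inner_add_left, inner_add_right, inner_add_right,
      inner_smul_left, inner_smul_right, inner_smul_right, inner_smul_left,
      ipA_conj' A hA x y]
    ring
  rw [hc]
  have hn : α.re^2 + α.im^2 = 1 := by
    have h := Complex.normSq_apply α
    rw [Complex.normSq_eq_norm_sq, hα] at h
    nlinarith [h]
  simp only [Complex.add_re, Complex.mul_re, Complex.mul_im, Complex.conj_re, Complex.conj_im,
    Complex.ofReal_re, Complex.ofReal_im]
  linear_combination (t^2 * (inner ℂ (A y) y : ℂ).re) * hn

lemma perp_iff' [NormedAddCommGroup H] [InnerProductSpace ℂ H] [CompleteSpace H]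
    (A : H →L[ℂ] H) (hA : A.IsPositive) {α : ℂ} (hα : ‖α‖ = 1)
    (x y : H) :
    y ∈ perpSetAlpha A α x ↔ ((starRingEnd ℂ) α * inner ℂ (A y) x).re = 0 := by
  have hpos : ∀ z : H, 0 ≤ (inner ℂ (A z) z : ℂ).re := fun z => hA.2 z
  simp only [perpSetAlpha, Set.mem_setOf_eq]
  set b := ((starRingEnd ℂ) α * inner ℂ (A y) x).re with hb
  set a := (inner ℂ (A y) y : ℂ).re with ha
  have ha0 : 0 ≤ a := hpos y
  constructor
  · intro h
    have key : ∀ t : ℝ, 0 ≤ 2*t*b + t^2*a := by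
      intro t
      have h1 := h t
      unfold seminormA at h1
      rw [Real.sqrt_le_sqrt_iff (hpos _)] at h1
      rw [expand_re A hA hα x y t] at h1
      linarith
    have hpos1 : (0:ℝ) < a + 1 := by linarith
    have h2 := key (-b/(a+1))
    have e : 2*(-b/(a+1))*b + (-b/(a+1))^2*a = -(b^2*(a+2))/(a+1)^2 := by
      field_simp
      ring
    rw [e, le_div_iff₀ (by positivity)] at h2
    have hb2 : b^2 ≤ 0 := by nlinarith
    have : b^2 = 0 := le_antisymm hb2 (sq_nonneg b)
    exact pow_eq_zero_iff (by norm_num) |>.mp this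
  · intro hb0 t
    unfold seminormA
    apply Real.sqrt_le_sqrt
    rw [expand_re A hA hα x y t, ← hb, hb0, ← ha]
    nlinarith [mul_nonneg (sq_nonneg t) ha0]

theorem statement5 [NormedAddCommGroup H] [InnerProductSpace ℂ H] [CompleteSpace H]
    (A T : H →L[ℂ] H) (hA : A.IsPositive)
    (hT : ∃ c : ℝ, 0 < c ∧ ∀ z : H, seminormA A (T z) ≤ c * seminormA A z)
    (x : H) (hx : seminormA A x ≠ 0) (α : ℂ) (hα : α ∈ Uset) :
    (∀ y ∈ perpSetAlpha A α x, T y ∈ perpSetAlpha A α (T x)) ↔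
      (∀ y : H, (α * ipA A (T y) (T x)).re
        = (seminormA A (T x)) ^ 2 / (seminormA A x) ^ 2 * (α * ipA A y x).re) := by
  obtain ⟨hα1, -⟩ := hα
  have hconj : (starRingEnd ℂ) α * α = 1 := conj_mul_self_unit hα1
  have hpos : ∀ z : H, 0 ≤ (inner ℂ (A z) z : ℂ).re := fun z => hA.2 z
  have hsq : ∀ z : H, seminormA A z ^ 2 = (inner ℂ (A z) z : ℂ).re := fun z =>
    Real.sq_sqrt (hpos z)
  have hNx : 0 < (inner ℂ (A x) x : ℂ).re := by
    rcases lt_or_eq_of_le (hpos x) with h | h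
    · exact h
    · exact absurd (by unfold seminormA; rw [← h, Real.sqrt_zero]) hx
  have hsmul : ∀ (c : ℂ) (u v : H),
      (inner ℂ (A (c • u)) v : ℂ) = (starRingEnd ℂ) c * inner ℂ (A u) v := by
    intro c u v; rw [map_smul, inner_smul_left]
  have hkval : seminormA A (T x) ^ 2 / seminormA A x ^ 2
      = (inner ℂ (A (T x)) (T x) : ℂ).re / (inner ℂ (A x) x : ℂ).re := by
    rw [hsq, hsq]
  constructor
  · intro h y
    have main : ∀ w : H, ((starRingEnd ℂ) α * inner ℂ (A (T w)) (T x)).re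
        = (inner ℂ (A (T x)) (T x) : ℂ).re / (inner ℂ (A x) x : ℂ).re
          * ((starRingEnd ℂ) α * inner ℂ (A w) x).re := by
      intro w
      set ψw := ((starRingEnd ℂ) α * (inner ℂ (A w) x : ℂ)).re with hψ
      set r : ℝ := ψw / (inner ℂ (A x) x : ℂ).re with hr
      set z : H := w - ((r:ℂ) * (starRingEnd ℂ) α) • x with hz
      have hiz : (inner ℂ (A z) x : ℂ)
          = inner ℂ (A w) x - (r:ℂ) * α * inner ℂ (A x) x := by
        rw [hz, map_sub, inner_sub_left, hsmul, map_mul, Complex.conj_conj,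
          Complex.conj_ofReal]
      have hψz : ((starRingEnd ℂ) α * (inner ℂ (A z) x : ℂ)).re = 0 := by
        rw [hiz, mul_sub]
        have e2 : (starRingEnd ℂ) α * ((r:ℂ) * α * inner ℂ (A x) x)
            = (r:ℂ) * inner ℂ (A x) x := by
          linear_combination ((r:ℂ) * (inner ℂ (A x) x : ℂ)) * hconj
        rw [e2, Complex.sub_re]
        have e5 : ((r:ℂ) * (inner ℂ (A x) x : ℂ)).re = r * (inner ℂ (A x) x : ℂ).re := by
          simp [Complex.mul_re, Complex.ofReal_re, Complex.ofReal_im]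
        rw [e5, ← hψ, hr]
        field_simp
        ring
      have hzperp : z ∈ perpSetAlpha A α x := (perp_iff' A hA hα1 x z).mpr hψz
      have hTz := (perp_iff' A hA hα1 (T x) (T z)).mp (h z hzperp)
      have hiTz : (inner ℂ (A (T z)) (T x) : ℂ)
          = inner ℂ (A (T w)) (T x) - (r:ℂ) * α * inner ℂ (A (T x)) (T x) := by
        rw [hz, map_sub, map_smul, map_sub, inner_sub_left, hsmul, map_mul,
          Complex.conj_conj, Complex.conj_ofReal]
      rw [hiTz, mul_sub] at hTz
      have e3 : (starRingEnd ℂ) α * ((r:ℂ) * α * inner ℂ (A (T x)) (T x))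
          = (r:ℂ) * inner ℂ (A (T x)) (T x) := by
        linear_combination ((r:ℂ) * (inner ℂ (A (T x)) (T x) : ℂ)) * hconj
      rw [e3, Complex.sub_re] at hTz
      have e4 : ((r:ℂ) * (inner ℂ (A (T x)) (T x) : ℂ)).re
          = r * (inner ℂ (A (T x)) (T x) : ℂ).re := by
        simp [Complex.mul_re, Complex.ofReal_re, Complex.ofReal_im]
      rw [e4] at hTz
      have : ((starRingEnd ℂ) α * inner ℂ (A (T w)) (T x)).re
          = r * (inner ℂ (A (T x)) (T x) : ℂ).re := by linarith
      rw [this, hr]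
      field_simp
    rw [hkval]
    have hw := main (((starRingEnd ℂ) α)^2 • y)
    have eT : (inner ℂ (A (T (((starRingEnd ℂ) α)^2 • y))) (T x) : ℂ)
        = (starRingEnd ℂ) (((starRingEnd ℂ) α)^2) * inner ℂ (A (T y)) (T x) := by
      rw [map_smul, hsmul]
    have ey : (inner ℂ (A (((starRingEnd ℂ) α)^2 • y)) x : ℂ)
        = (starRingEnd ℂ) (((starRingEnd ℂ) α)^2) * inner ℂ (A y) x := hsmul _ _ _
    rw [eT, ey] at hw
    have hred : ∀ zc : ℂ, (starRingEnd ℂ) α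
        * ((starRingEnd ℂ) (((starRingEnd ℂ) α)^2) * zc) = α * zc := by
      intro zc
      have : (starRingEnd ℂ) (((starRingEnd ℂ) α)^2) = α^2 := by
        rw [map_pow, Complex.conj_conj]
      rw [this]
      linear_combination (α * zc) * hconj
    rw [hred, hred] at hw
    unfold ipA
    exact hw
  · intro h y hy
    rw [perp_iff' A hA hα1] at hy ⊢
    have h2 := h ((α^2) • y)
    unfold ipA at h2
    have eT : (inner ℂ (A (T ((α^2) • y))) (T x) : ℂ)
        = (starRingEnd ℂ) (α^2) * inner ℂ (A (T y)) (T x) := by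
      rw [map_smul, hsmul]
    have ey : (inner ℂ (A ((α^2) • y)) x : ℂ)
        = (starRingEnd ℂ) (α^2) * inner ℂ (A y) x := hsmul _ _ _
    rw [eT, ey] at h2
    have hred : ∀ zc : ℂ, α * ((starRingEnd ℂ) (α^2) * zc) = (starRingEnd ℂ) α * zc := by
      intro zc
      rw [map_pow]
      linear_combination ((starRingEnd ℂ) α * zc) * hconj
    rw [hred, hred] at h2
    rw [h2, hy, mul_zero]
end

section
/- Let H be a complex Hilbert space, A a positive bounded linear operator on H, and T an A-bounded operator on H with ‖T‖_A ≠ 0. Then for every x ∈ M_T^A and every y ∈ H: (i) y ∈ x^{A+} if and only if Ty ∈ (Tx)^{A+}; (ii) y ∈ x^{A-} if and only if Ty ∈ (Tx)^{A-}; (iii) for every α ∈ U, y ∈ x^{⊥_α^A} if and only if Ty ∈ (Tx)^{⊥_α^A}. -/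
open ContinuousLinearMap

variable {H : Type*}

/-- `‖T‖_A`, the `A`-operator seminorm. -/
noncomputable def opNormA [NormedAddCommGroup H] [InnerProductSpace ℂ H]
    (A T : H →L[ℂ] H) : ℝ :=
  sSup ((fun u => seminormA A (T u)) '' {u : H | seminormA A u = 1})

section Aux

variable [NormedAddCommGroup H] [InnerProductSpace ℂ H] [CompleteSpace H]

lemma reA_nonneg (A : H →L[ℂ] H) (hA : A.IsPositive) (x : H) :
    0 ≤ (inner ℂ (A x) x : ℂ).re := by
  have := hA.inner_nonneg_left x
  simpa using (RCLike.nonneg_iff.mp this).1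

lemma seminormA_nonneg (A : H →L[ℂ] H) (x : H) : 0 ≤ seminormA A x :=
  Real.sqrt_nonneg _

lemma seminormA_sq (A : H →L[ℂ] H) (hA : A.IsPositive) (x : H) :
    (seminormA A x) ^ 2 = (inner ℂ (A x) x : ℂ).re := by
  rw [seminormA, Real.sq_sqrt (reA_nonneg A hA x)]

lemma inner_expand (A : H →L[ℂ] H) (hA : IsSelfAdjoint A) (x y : H) (l : ℂ) :
    (inner ℂ (A (x + l • y)) (x + l • y) : ℂ).re
      = (inner ℂ (A x) x : ℂ).re + 2 * (l * inner ℂ (A x) y).re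
        + Complex.normSq l * (inner ℂ (A y) y : ℂ).re := by
  have hsym : (inner ℂ (A y) x : ℂ) = starRingEnd ℂ (inner ℂ (A x) y) := by
    rw [← inner_conj_symm]
    congr 1
    exact (hA.isSymmetric x y).symm
  rw [map_add, map_smul, inner_add_left, inner_add_right, inner_add_right,
    inner_smul_left, inner_smul_right, inner_smul_right, inner_smul_left, hsym]
  simp only [Complex.add_re, Complex.mul_re, Complex.mul_im, Complex.conj_re,
    Complex.conj_im, Complex.normSq_apply]
  ring

lemma re_talpha (t : ℝ) (α c : ℂ) : (((t : ℂ) * α) * c).re = t * (α * c).re := by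
  simp [Complex.mul_re, Complex.mul_im]
  ring

lemma normSq_talpha (t : ℝ) (α : ℂ) :
    Complex.normSq ((t : ℂ) * α) = t ^ 2 * Complex.normSq α := by
  simp [Complex.normSq_mul, Complex.normSq_ofReal, sq]

/-- Seminorm expansion along the line `x + tα y`. -/
lemma seminormA_line (A : H →L[ℂ] H) (hA : A.IsPositive) (x y : H) (α : ℂ) (t : ℝ) :
    (inner ℂ (A (x + ((t : ℂ) * α) • y)) (x + ((t : ℂ) * α) • y) : ℂ).re
      = (inner ℂ (A x) x : ℂ).re + 2 * t * (α * inner ℂ (A x) y).re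
        + t ^ 2 * (Complex.normSq α * (inner ℂ (A y) y : ℂ).re) := by
  rw [inner_expand A hA.isSelfAdjoint x y ((t : ℂ) * α), re_talpha, normSq_talpha]
  ring

lemma char_plus (A : H →L[ℂ] H) (hA : A.IsPositive) (α : ℂ) (x y : H) :
    y ∈ plusSetAlpha A α x ↔ 0 ≤ (α * (inner ℂ (A x) y : ℂ)).re := by
  set a := (inner ℂ (A x) x : ℂ).re with ha_def
  set R := (α * (inner ℂ (A x) y : ℂ)).re with hR_def
  set m := Complex.normSq α * (inner ℂ (A y) y : ℂ).re with hm_def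
  have hm : 0 ≤ m := mul_nonneg (Complex.normSq_nonneg α) (reA_nonneg A hA y)
  constructor
  · intro h
    by_contra hR
    push_neg at hR
    set t : ℝ := -R / (m + 1) with ht_def
    have ht : 0 < t := by
      apply div_pos (by linarith) (by linarith)
    have h1 := h t ht.le
    have hb : 0 ≤ (inner ℂ (A (x + ((t : ℂ) * α) • y)) (x + ((t : ℂ) * α) • y) : ℂ).re :=
      reA_nonneg A hA _
    have hlt : (inner ℂ (A (x + ((t : ℂ) * α) • y)) (x + ((t : ℂ) * α) • y) : ℂ).re < a := by
      have heq := seminormA_line A hA x y α t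
      simp only [← ha_def, ← hR_def, ← hm_def] at heq
      rw [heq]
      have h2 : 2 * t * R + t ^ 2 * m < 0 := by
        have hmn : (0:ℝ) < m + 1 := by linarith
        have ht2 : t * (m + 1) = -R := by rw [ht_def, div_mul_cancel₀ _ hmn.ne']
        nlinarith [sq_nonneg t, mul_pos ht ht]
      linarith
    have := Real.sqrt_lt_sqrt hb hlt
    simp only [seminormA] at h1
    linarith
  · intro hR t ht
    apply Real.sqrt_le_sqrt
    rw [seminormA_line A hA x y α t]
    nlinarith [sq_nonneg t]

lemma char_minus (A : H →L[ℂ] H) (hA : A.IsPositive) (α : ℂ) (x y : H) :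
    y ∈ minusSetAlpha A α x ↔ (α * (inner ℂ (A x) y : ℂ)).re ≤ 0 := by
  set a := (inner ℂ (A x) x : ℂ).re with ha_def
  set R := (α * (inner ℂ (A x) y : ℂ)).re with hR_def
  set m := Complex.normSq α * (inner ℂ (A y) y : ℂ).re with hm_def
  have hm : 0 ≤ m := mul_nonneg (Complex.normSq_nonneg α) (reA_nonneg A hA y)
  constructor
  · intro h
    by_contra hR
    push_neg at hR
    set t : ℝ := -R / (m + 1) with ht_def
    have ht : t < 0 := by
      apply div_neg_of_neg_of_pos (by linarith) (by linarith)
    have h1 := h t ht.le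
    have hb : 0 ≤ (inner ℂ (A (x + ((t : ℂ) * α) • y)) (x + ((t : ℂ) * α) • y) : ℂ).re :=
      reA_nonneg A hA _
    have hlt : (inner ℂ (A (x + ((t : ℂ) * α) • y)) (x + ((t : ℂ) * α) • y) : ℂ).re < a := by
      have heq := seminormA_line A hA x y α t
      simp only [← ha_def, ← hR_def, ← hm_def] at heq
      rw [heq]
      have h2 : 2 * t * R + t ^ 2 * m < 0 := by
        have hmn : (0:ℝ) < m + 1 := by linarith
        have ht2 : t * (m + 1) = -R := by rw [ht_def, div_mul_cancel₀ _ hmn.ne']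
        nlinarith [sq_nonneg t, mul_pos_of_neg_of_neg ht ht]
      linarith
    have := Real.sqrt_lt_sqrt hb hlt
    simp only [seminormA] at h1
    linarith
  · intro hR t ht
    apply Real.sqrt_le_sqrt
    rw [seminormA_line A hA x y α t]
    nlinarith [sq_nonneg t]

lemma char_perp (A : H →L[ℂ] H) (hA : A.IsPositive) (α : ℂ) (x y : H) :
    y ∈ perpSetAlpha A α x ↔ (α * (inner ℂ (A x) y : ℂ)).re = 0 := by
  have hsplit : y ∈ perpSetAlpha A α x ↔ y ∈ plusSetAlpha A α x ∧ y ∈ minusSetAlpha A α x := by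
    constructor
    · intro h
      exact ⟨fun t _ => h t, fun t _ => h t⟩
    · rintro ⟨h1, h2⟩ t
      rcases le_or_gt 0 t with ht | ht
      · exact h1 t ht
      · exact h2 t ht.le
  rw [hsplit, char_plus A hA, char_minus A hA]
  constructor
  · rintro ⟨h1, h2⟩; linarith
  · intro h; constructor <;> linarith

lemma seminormA_smul (A : H →L[ℂ] H) (hA : A.IsPositive) (s : ℝ) (hs : 0 ≤ s) (z : H) :
    seminormA A ((s : ℂ) • z) = s * seminormA A z := by
  have : (inner ℂ (A ((s : ℂ) • z)) ((s : ℂ) • z) : ℂ).re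
      = s ^ 2 * (inner ℂ (A z) z : ℂ).re := by
    rw [map_smul, inner_smul_left, inner_smul_right]
    simp only [← mul_assoc, Complex.mul_re, Complex.conj_re, Complex.conj_im,
      Complex.ofReal_re, Complex.ofReal_im, Complex.mul_im]
    ring
  rw [seminormA, this, Real.sqrt_mul (sq_nonneg s), Real.sqrt_sq hs, seminormA]

lemma opNormA_bound (A T : H →L[ℂ] H) (hA : A.IsPositive)
    (hT : ∃ c : ℝ, 0 < c ∧ ∀ z : H, seminormA A (T z) ≤ c * seminormA A z) (z : H) :
    seminormA A (T z) ≤ opNormA A T * seminormA A z := by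
  obtain ⟨c, hc, hTc⟩ := hT
  have hbdd : BddAbove ((fun u => seminormA A (T u)) '' {u : H | seminormA A u = 1}) := by
    refine ⟨c, ?_⟩
    rintro v ⟨u, hu, rfl⟩
    calc seminormA A (T u) ≤ c * seminormA A u := hTc u
    _ = c := by rw [hu, mul_one]
  rcases eq_or_lt_of_le (seminormA_nonneg A z) with hz | hz
  · have h0 : seminormA A (T z) = 0 := by
      have := hTc z
      rw [← hz, mul_zero] at this
      exact le_antisymm this (seminormA_nonneg A (T z))
    rw [h0, ← hz, mul_zero]
  · set s := seminormA A z with hs_def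
    have hu1 : seminormA A (((s⁻¹ : ℝ) : ℂ) • z) = 1 := by
      rw [seminormA_smul A hA s⁻¹ (inv_nonneg.mpr hz.le) z]
      field_simp
      rfl
    have hmem : seminormA A (T (((s⁻¹ : ℝ) : ℂ) • z)) ∈
        ((fun u => seminormA A (T u)) '' {u : H | seminormA A u = 1}) :=
      ⟨((s⁻¹ : ℝ) : ℂ) • z, hu1, rfl⟩
    have hle : seminormA A (T (((s⁻¹ : ℝ) : ℂ) • z)) ≤ opNormA A T := le_csSup hbdd hmem
    have heq : seminormA A (T (((s⁻¹ : ℝ) : ℂ) • z)) = s⁻¹ * seminormA A (T z) := by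
      rw [map_smul, seminormA_smul A hA s⁻¹ (inv_nonneg.mpr hz.le)]
    rw [heq] at hle
    calc seminormA A (T z) = s * (s⁻¹ * seminormA A (T z)) := by field_simp
    _ ≤ s * opNormA A T := by
        exact mul_le_mul_of_nonneg_left hle hz.le
    _ = opNormA A T * s := mul_comm _ _

/-- Key lemma: at a norm-attaining point, `⟨Tx, Ty⟩_A = ‖T‖_A² ⟨x, y⟩_A`. -/
lemma key_eq (A T : H →L[ℂ] H) (hA : A.IsPositive)
    (hT : ∃ c : ℝ, 0 < c ∧ ∀ z : H, seminormA A (T z) ≤ c * seminormA A z)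
    (x : H) (hx : seminormA A x = 1 ∧ seminormA A (T x) = opNormA A T) (y : H) :
    (inner ℂ (A (T x)) (T y) : ℂ) = ((opNormA A T : ℝ) ^ 2 : ℝ) * (inner ℂ (A x) y : ℂ) := by
  set k := opNormA A T with hk_def
  have hk0 : 0 ≤ k := hx.2 ▸ seminormA_nonneg A (T x)
  have hax : (inner ℂ (A x) x : ℂ).re = 1 := by
    have := seminormA_sq A hA x
    rw [hx.1] at this; linarith [this.symm]
  have haTx : (inner ℂ (A (T x)) (T x) : ℂ).re = k ^ 2 := by
    have := seminormA_sq A hA (T x)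
    rw [hx.2] at this; linarith [this.symm]
  set c : ℂ := inner ℂ (A x) y with hc_def
  set c' : ℂ := inner ℂ (A (T x)) (T y) with hc'_def
  set d : ℂ := ((k ^ 2 : ℝ) : ℂ) * c - c' with hd_def
  set M : ℝ := k ^ 2 * (inner ℂ (A y) y : ℂ).re - (inner ℂ (A (T y)) (T y) : ℂ).re with hM_def
  have hM : 0 ≤ M := by
    have h1 := opNormA_bound A T hA hT y
    have h2 : (seminormA A (T y)) ^ 2 ≤ (k * seminormA A y) ^ 2 := by
      apply sq_le_sq' _ h1
      have := seminormA_nonneg A (T y)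
      nlinarith [mul_nonneg hk0 (seminormA_nonneg A y)]
    rw [seminormA_sq A hA (T y), mul_pow, seminormA_sq A hA y] at h2
    simp only [hM_def]; linarith
  have hineq : ∀ l : ℂ, 0 ≤ 2 * (l * d).re + Complex.normSq l * M := by
    intro l
    have h1 := opNormA_bound A T hA hT (x + l • y)
    have h2 : (seminormA A (T (x + l • y))) ^ 2 ≤ (k * seminormA A (x + l • y)) ^ 2 := by
      apply sq_le_sq' _ h1
      have := seminormA_nonneg A (T (x + l • y))
      nlinarith [mul_nonneg hk0 (seminormA_nonneg A (x + l • y))]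
    rw [seminormA_sq A hA, mul_pow, seminormA_sq A hA] at h2
    have hTxy : T (x + l • y) = T x + l • T y := by rw [map_add, map_smul]
    rw [hTxy] at h2
    rw [inner_expand A hA.isSelfAdjoint x y l, inner_expand A hA.isSelfAdjoint (T x) (T y) l,
      hax, haTx] at h2
    have hre : (l * d).re = k ^ 2 * (l * c).re - (l * c').re := by
      rw [hd_def, mul_sub, Complex.sub_re, mul_left_comm, Complex.re_ofReal_mul]
    rw [hre, hM_def]
    ring_nf
    ring_nf at h2
    linarith
  have hd0 : d = 0 := by
    by_contra hd
    have hnsq : 0 < Complex.normSq d := by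
      rcases lt_or_eq_of_le (Complex.normSq_nonneg d) with h | h
      · exact h
      · exact absurd (Complex.normSq_eq_zero.mp h.symm) hd
    set t : ℝ := 1 / (M + 1) with ht_def
    have ht : 0 < t := by positivity
    have := hineq (((-t : ℝ) : ℂ) * starRingEnd ℂ d)
    have hre2 : ((((-t : ℝ) : ℂ) * starRingEnd ℂ d) * d).re = -t * Complex.normSq d := by
      rw [mul_assoc, ← Complex.normSq_eq_conj_mul_self]
      simp [Complex.mul_re, Complex.ofReal_re, Complex.ofReal_im]
    have hns2 : Complex.normSq (((-t : ℝ) : ℂ) * starRingEnd ℂ d)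
        = t ^ 2 * Complex.normSq d := by
      rw [Complex.normSq_mul, Complex.normSq_conj, Complex.normSq_ofReal]
      ring
    rw [hre2, hns2] at this
    have htM : t * (M + 1) = 1 := by rw [ht_def, div_mul_cancel₀ _ (by linarith : (M + 1) ≠ 0)]
    nlinarith [mul_pos ht hnsq, mul_pos (mul_pos ht ht) hnsq]
  exact (sub_eq_zero.mp hd0).symm

end Aux

theorem statement11 [NormedAddCommGroup H] [InnerProductSpace ℂ H] [CompleteSpace H]
    (A T : H →L[ℂ] H) (hA : A.IsPositive)
    (hT : ∃ c : ℝ, 0 < c ∧ ∀ z : H, seminormA A (T z) ≤ c * seminormA A z)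
    (hTnz : opNormA A T ≠ 0)
    (x : H) (hx : seminormA A x = 1 ∧ seminormA A (T x) = opNormA A T) (y : H) :
    (y ∈ plusSetA A x ↔ T y ∈ plusSetA A (T x)) ∧
    (y ∈ minusSetA A x ↔ T y ∈ minusSetA A (T x)) ∧
    (∀ α ∈ Uset, (y ∈ perpSetAlpha A α x ↔ T y ∈ perpSetAlpha A α (T x))) := by
  set k := opNormA A T with hk_def
  have hk0 : 0 ≤ k := hx.2 ▸ seminormA_nonneg A (T x)
  have hkpos : 0 < k := lt_of_le_of_ne hk0 (Ne.symm hTnz)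
  have hkey := key_eq A T hA hT x hx y
  have hre : ∀ α : ℂ, (α * (inner ℂ (A (T x)) (T y) : ℂ)).re
      = k ^ 2 * (α * (inner ℂ (A x) y : ℂ)).re := by
    intro α
    rw [hkey, mul_left_comm, Complex.re_ofReal_mul, hk_def]
  have hk2 : 0 < k ^ 2 := by positivity
  have hplus : ∀ α : ℂ, (y ∈ plusSetAlpha A α x ↔ T y ∈ plusSetAlpha A α (T x)) := by
    intro α
    rw [char_plus A hA, char_plus A hA, hre α]
    constructor
    · intro h; positivity
    · intro h; nlinarith
  have hminus : ∀ α : ℂ, (y ∈ minusSetAlpha A α x ↔ T y ∈ minusSetAlpha A α (T x)) := by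
    intro α
    rw [char_minus A hA, char_minus A hA, hre α]
    constructor
    · intro h; nlinarith
    · intro h; nlinarith
  refine ⟨?_, ?_, ?_⟩
  · simp only [plusSetA, Set.mem_iInter₂]
    exact forall_congr' fun α => forall_congr' fun _ => hplus α
  · simp only [minusSetA, Set.mem_iInter₂]
    exact forall_congr' fun α => forall_congr' fun _ => hminus α
  · intro α _
    rw [char_perp A hA, char_perp A hA, hre α]
    constructor
    · intro h; rw [h, mul_zero]
    · intro h
      exact (mul_eq_zero.mp h).resolve_left (by positivity)
end
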